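/- (Ufnarovskij) A nonempty finite word w over a totally ordered alphabet is a Lyndon word if and only if for every nonempty proper prefix p of w, one has p^ω < w^ω in the lexicographic order on infinite words. -/
import Mathlib


variable {A : Type*} [LinearOrder A] [Inhabited A]

/-- The infinite periodic word `u^ω = uuu⋯`, as a function `ℕ → A`. -/
def omegaPow (u : List A) : ℕ → A := fun n => u.getD (n % u.length) default

/-- Lexicographic order on infinite words: `s < t` iff at the first position where
they differ, `s` has the smaller letter. -/
def lexLt (s t : ℕ → A) : Prop := ∃ k, (∀ i < k, s i = t i) ∧ s k < t k

/-- A nonempty word `w` is a Lyndon word: `w` is lexicographically smaller than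
each of its nonempty proper suffixes. -/
def IsLyndon (w : List A) : Prop :=
  w ≠ [] ∧ ∀ v, v <:+ w → v ≠ [] → v ≠ w → List.Lex (· < ·) w v

private lemma omegaPow_of_lt (u : List A) {n : ℕ} (h : n < u.length) :
    omegaPow u n = u.getD n default := by
  simp [omegaPow, Nat.mod_eq_of_lt h]

private lemma omegaPow_add_left (u : List A) {a : ℕ} (n : ℕ) (ha : a % u.length = 0) :
    omegaPow u (a + n) = omegaPow u n := by
  simp [omegaPow, Nat.add_mod, ha]

private lemma lexLt_asymm (s t : ℕ → A) (h1 : lexLt s t) (h2 : lexLt t s) : False := by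
  obtain ⟨k1, hag1, hlt1⟩ := h1
  obtain ⟨k2, hag2, hlt2⟩ := h2
  rcases lt_trichotomy k1 k2 with h | h | h
  · exact absurd (hag2 k1 h ▸ hlt1) (lt_irrefl _)
  · subst h; exact absurd (hlt1.trans hlt2) (lt_irrefl _)
  · exact absurd (hag1 k2 h ▸ hlt2) (lt_irrefl _)

private lemma lex_of_getD : ∀ (x y : List A) (j : ℕ), j < x.length → j < y.length →
    (∀ i < j, x.getD i default = y.getD i default) →
    x.getD j default < y.getD j default → List.Lex (· < ·) x y
  | [], _, j, hjx, _, _, _ => by simp at hjx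
  | _ :: _, [], j, _, hjy, _, _ => by simp at hjy
  | a :: x, b :: y, 0, hjx, hjy, hag, hlt => List.Lex.rel (by simpa using hlt)
  | a :: x, b :: y, j + 1, hjx, hjy, hag, hlt => by
    have h0 : a = b := by simpa using hag 0 (Nat.succ_pos _)
    subst h0
    exact List.Lex.cons (lex_of_getD x y j (by simpa using hjx) (by simpa using hjy)
      (fun i hi => by simpa using hag (i + 1) (by omega)) (by simpa using hlt))

private lemma exists_of_lex {x y : List A} (h : List.Lex (· < ·) x y)
    (hlen : y.length ≤ x.length) :
    ∃ j, j < y.length ∧ (∀ i < j, x.getD i default = y.getD i default) ∧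
      x.getD j default < y.getD j default := by
  induction h with
  | nil => simp at hlen
  | @rel a l b l' hab => exact ⟨0, by simp, fun i hi => by omega, by simpa using hab⟩
  | @cons a l l' h ih =>
    obtain ⟨j, hj, hag, hlt⟩ := ih (by simpa using hlen)
    refine ⟨j + 1, by simpa using hj, fun i hi => ?_, by simpa using hlt⟩
    match i with
    | 0 => rfl
    | i + 1 => simpa using hag i (by omega)

/-- (Ufnarovskij) A nonempty word `w` is a Lyndon word iff `p^ω < w^ω` for every
nonempty proper prefix `p` of `w`. -/
theorem isLyndon_iff_omegaPow_lt_prefixes (w : List A) (hw : w ≠ []) :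
    IsLyndon w ↔
      ∀ p : List A, p <+: w → p ≠ [] → p ≠ w →
        lexLt (omegaPow p) (omegaPow w) := by
  have hLw : 0 < w.length := List.length_pos_iff.mpr hw
  constructor
  · -- Lyndon → prefix condition
    intro hL p hpre hpne hpnw
    obtain ⟨s, hs⟩ := hpre
    have hsne : s ≠ [] := by rintro rfl; exact hpnw (by simpa using hs)
    have hP : 0 < p.length := List.length_pos_iff.mpr hpne
    have hS : 0 < s.length := List.length_pos_iff.mpr hsne
    have hlen0 : p.length + s.length = w.length := by
      have := congrArg List.length hs; simpa using this
    have hPL : p.length < w.length := by omega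
    -- letters of w below p.length are letters of p
    have hpw : ∀ i < p.length, p.getD i default = w.getD i default := by
      intro i hi
      rw [← hs, List.getD_append _ _ _ _ hi]
    -- letters of s inside w
    have hsw : ∀ i < s.length, s.getD i default = w.getD (p.length + i) default := by
      intro i hi
      rw [← hs, List.getD_append_right _ _ _ _ (by omega)]
      simp
    have hsL : s.length < w.length := by omega
    -- from Lyndon: w < s with a strict difference
    have hLex : List.Lex (· < ·) w s := hL.2 s ⟨p, hs⟩ hsne
      (fun h => by rw [h] at hsL; omega)
    obtain ⟨j, hjs, hagj, hltj⟩ := exists_of_lex hLex (le_of_lt hsL)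
    -- p^ω and w^ω agree below p.length
    have agree_low : ∀ i < p.length, omegaPow p i = omegaPow w i := by
      intro i hi
      rw [omegaPow_of_lt p hi, omegaPow_of_lt w (lt_trans hi hPL), hpw i hi]
    -- there is a difference
    have hex : ∃ k, omegaPow p k ≠ omegaPow w k := by
      by_contra hall
      push_neg at hall
      have h1 : s.getD j default = w.getD j default := by
        rw [hsw j hjs, ← omegaPow_of_lt w (by omega : p.length + j < w.length),
          ← hall (p.length + j), omegaPow_add_left p j (by simp), hall j,
          omegaPow_of_lt w (by omega : j < w.length)]
      rw [h1] at hltj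
      exact absurd hltj (lt_irrefl _)
    classical
    set k := Nat.find hex with hkdef
    have hkne : omegaPow p k ≠ omegaPow w k := Nat.find_spec hex
    have hkag : ∀ i < k, omegaPow p i = omegaPow w i :=
      fun i hi => not_not.mp (Nat.find_min hex hi)
    have hkP : p.length ≤ k := by
      by_contra hlt
      exact hkne (agree_low k (by omega))
    refine ⟨k, hkag, ?_⟩
    rcases hkne.lt_or_gt with h | h
    · exact h
    -- rule out w^ω k < p^ω k
    exfalso
    set a := p.length * (k / p.length) with hadef
    set r := k % p.length with hrdef
    have hk_eq : a + r = k := Nat.div_add_mod k p.length ▸ by omega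
    have ha_mod : a % p.length = 0 := Nat.mul_mod_right _ _
    have hr : r < p.length := Nat.mod_lt _ hP
    have haP : p.length ≤ a := by
      have h1 : 1 ≤ k / p.length := (Nat.one_le_div_iff hP).mpr hkP
      calc p.length = p.length * 1 := by ring
        _ ≤ a := Nat.mul_le_mul_left _ h1
    have hrk : r < k := by omega
    have hpk_r : omegaPow p k = omegaPow p r := by
      rw [← hk_eq]; exact omegaPow_add_left p r ha_mod
    set b := a % w.length with hbdef
    have hbL : b < w.length := Nat.mod_lt _ hLw
    have hwab : ∀ i, omegaPow w (a + i) = omegaPow w (b + i) := by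
      intro i
      simp only [omegaPow]
      congr 1
      rw [hbdef]
      exact (Nat.mod_add_mod a w.length i).symm
    by_cases hb : b = 0
    · -- a is a multiple of w.length
      have h1 : omegaPow w r = omegaPow w k := by
        rw [← hk_eq, hwab r, hb, Nat.zero_add]
      have h2 : omegaPow p r = omegaPow w r := hkag r hrk
      exact hkne (by rw [hpk_r, h2, h1])
    · -- b ≠ 0: use the suffix dropped at b
      set s' := w.drop b with hs'def
      have hs'len : s'.length = w.length - b := by simp [hs'def]
      have hs'ne : s' ≠ [] := by
        intro hnil
        rw [hnil] at hs'len; simp at hs'len; omega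
      have hs'nw : s' ≠ w := by
        intro heq
        have := congrArg List.length heq
        rw [hs'len] at this
        omega
      have hLex' : List.Lex (· < ·) w s' := hL.2 s' (List.drop_suffix _ _) hs'ne hs'nw
      obtain ⟨j', hj's, hagj', hltj'⟩ := exists_of_lex hLex' (by rw [hs'len]; omega)
      have hs'w : ∀ i < s'.length, s'.getD i default = omegaPow w (a + i) := by
        intro i hi
        rw [hwab i, omegaPow_of_lt w (by omega : b + i < w.length), hs'def,
          List.getD_eq_getElem _ _ (by rwa [← hs'def]), List.getElem_drop,
          List.getD_eq_getElem _ _ (by omega)]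
      have hwlow : ∀ i < w.length, w.getD i default = omegaPow w i :=
        fun i hi => (omegaPow_of_lt w hi).symm
      -- key: omegaPow w (a + i) = omegaPow w i for i < r (both < k in agreement range via p^ω)
      have hkey : ∀ i < r, omegaPow w (a + i) = omegaPow w i := by
        intro i hi
        have h1 : omegaPow p (a + i) = omegaPow p i := omegaPow_add_left p i ha_mod
        rw [← hkag (a + i) (by omega), h1, hkag i (by omega)]
      have hwk : omegaPow w k < omegaPow p r := by rw [← hpk_r]; exact h
      have hwr : omegaPow p r = omegaPow w r := hkag r hrk
      rcases lt_trichotomy j' r with hjr | hjr | hjr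
      · -- j' < r
        have : w.getD j' default < w.getD j' default := by
          calc w.getD j' default < s'.getD j' default := hltj'
            _ = omegaPow w (a + j') := hs'w j' hj's
            _ = omegaPow w j' := hkey j' hjr
            _ = w.getD j' default := omegaPow_of_lt w (by omega)
        exact absurd this (lt_irrefl _)
      · -- j' = r
        rw [hjr] at hltj' hj's
        have : w.getD r default < w.getD r default := by
          calc w.getD r default < s'.getD r default := hltj'
            _ = omegaPow w (a + r) := hs'w r hj's
            _ = omegaPow w k := by rw [hk_eq]
            _ < omegaPow p r := hwk
            _ = omegaPow w r := hwr
            _ = w.getD r default := omegaPow_of_lt w (by omega)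
        exact absurd this (lt_irrefl _)
      · -- r < j'
        have : w.getD r default < w.getD r default := by
          calc w.getD r default = s'.getD r default := hagj' r hjr
            _ = omegaPow w (a + r) := hs'w r (by omega)
            _ = omegaPow w k := by rw [hk_eq]
            _ < omegaPow p r := hwk
            _ = omegaPow w r := hwr
            _ = w.getD r default := omegaPow_of_lt w (by omega)
        exact absurd this (lt_irrefl _)
  · -- prefix condition → Lyndon
    intro H
    refine ⟨hw, ?_⟩
    intro v hsuf hvne hvnw
    obtain ⟨q, hq⟩ := hsuf
    have hqne : q ≠ [] := by rintro rfl; exact hvnw (by simpa using hq)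
    have hQ : 0 < q.length := List.length_pos_iff.mpr hqne
    have hV : 0 < v.length := List.length_pos_iff.mpr hvne
    have hlen : q.length + v.length = w.length := by
      have := congrArg List.length hq; simpa using this
    have hQL : q.length < w.length := by omega
    have hVL : v.length < w.length := by omega
    -- general period lemma inside, using H
    have key : ∀ (p : List A), p <+: w → p ≠ [] → p ≠ w →
        ∀ n, (∀ i < n, omegaPow w (p.length + i) = omegaPow w i) →
        ∀ i < p.length + n, omegaPow w i = omegaPow p i := by
      intro p hpre hpne hpnw n hag
      obtain ⟨t, ht⟩ := hpre
      have hP : 0 < p.length := List.length_pos_iff.mpr hpne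
      intro i
      induction i using Nat.strong_induction_on with
      | _ i ih =>
        intro hi
        by_cases hip : i < p.length
        · rw [omegaPow_of_lt p hip, omegaPow_of_lt w (by
            have := congrArg List.length ht; simp at this; omega), ← ht,
            List.getD_append _ _ _ _ hip]
        · push_neg at hip
          have h1 : i = p.length + (i - p.length) := by omega
          have h2 : i - p.length < n := by omega
          calc omegaPow w i = omegaPow w (p.length + (i - p.length)) := by rw [← h1]
            _ = omegaPow w (i - p.length) := hag _ h2
            _ = omegaPow p (i - p.length) := ih _ (by omega) (by omega)
            _ = omegaPow p (p.length + (i - p.length)) :=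
                (omegaPow_add_left p _ (by simp)).symm
            _ = omegaPow p i := by rw [← h1]
    -- Lemma B: no shift of w^ω is lexicographically smaller than w^ω
    have lemB : ∀ (p : List A), p <+: w → p ≠ [] → p ≠ w →
        ∀ n, (∀ i < n, omegaPow w (p.length + i) = omegaPow w i) →
        ¬ omegaPow w (p.length + n) < omegaPow w n := by
      intro p hpre hpne hpnw n hag hlt
      have hP : 0 < p.length := List.length_pos_iff.mpr hpne
      have hkey := key p hpre hpne hpnw n hag
      have hWP : lexLt (omegaPow w) (omegaPow p) := by
        refine ⟨p.length + n, fun i hi => hkey i hi, ?_⟩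
        rw [omegaPow_add_left p n (by simp), ← hkey n (by omega)]
        exact hlt
      exact lexLt_asymm _ _ (H p hpre hpne hpnw) hWP
    have hqpre : q <+: w := ⟨v, hq⟩
    have hqnw : q ≠ w := by
      intro heq
      have := congrArg List.length heq
      omega
    -- trichotomy on the shift by q.length
    by_cases hall : ∀ i, omegaPow w (q.length + i) = omegaPow w i
    · -- w^ω = q^ω, contradicting lexLt q^ω w^ω
      exfalso
      obtain ⟨k, _, hlt⟩ := H q hqpre hqne hqnw
      have := key q hqpre hqne hqnw (k + 1) (fun i _ => hall i) k (by omega)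
      rw [this] at hlt
      exact absurd hlt (lt_irrefl _)
    · push_neg at hall
      classical
      set n := Nat.find hall with hndef
      have hnne : omegaPow w (q.length + n) ≠ omegaPow w n := Nat.find_spec hall
      have hnag : ∀ i < n, omegaPow w (q.length + i) = omegaPow w i :=
        fun i hi => not_not.mp (Nat.find_min hall hi)
      rcases hnne.lt_or_gt with hsmall | hbig
      · exact absurd hsmall (lemB q hqpre hqne hqnw n hnag)
      · -- w^ω n < w^ω (q.length + n)
        -- letters of v inside w
        have hvw : ∀ i < v.length, v.getD i default = w.getD (q.length + i) default := by
          intro i hi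
          rw [← hq, List.getD_append_right _ _ _ _ (by omega)]
          simp
        by_cases hn : n < v.length
        · -- produce the Lex witness directly
          apply lex_of_getD w v n (by omega) hn
          · intro i hi
            rw [hvw i (by omega), ← omegaPow_of_lt w (by omega : i < w.length),
              ← omegaPow_of_lt w (by omega : q.length + i < w.length), hnag i hi]
          · rw [hvw n hn, ← omegaPow_of_lt w (by omega : n < w.length),
              ← omegaPow_of_lt w (by omega : q.length + n < w.length)]
            exact hbig
        · -- n ≥ v.length: shift by v.length decreases, contradiction with lemB
          exfalso
          push_neg at hn
          have hwperiod : ∀ x, omegaPow w (w.length + x) = omegaPow w x :=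
            fun x => omegaPow_add_left w x (by simp)
          have hagV : ∀ j < n - v.length, omegaPow w (v.length + j) = omegaPow w j := by
            intro j hj
            have h1 := hnag (v.length + j) (by omega)
            rw [show q.length + (v.length + j) = w.length + j by omega, hwperiod j] at h1
            exact h1.symm
          have hltV : omegaPow w (v.length + (n - v.length)) < omegaPow w (n - v.length) := by
            rw [show v.length + (n - v.length) = n by omega]
            have h2 : omegaPow w (q.length + n) = omegaPow w (n - v.length) := by
              rw [show q.length + n = w.length + (n - v.length) by omega, hwperiod]
            rw [← h2]
            exact hbig
          -- take the prefix of length v.length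
          have hvpre : w.take v.length <+: w := List.take_prefix _ _
          have hvtlen : (w.take v.length).length = v.length := by
            simp [Nat.min_eq_left (le_of_lt hVL)]
          have hvtne : w.take v.length ≠ [] := by
            intro hnil
            have := congrArg List.length hnil
            rw [hvtlen] at this
            simp only [List.length_nil] at this
            omega
          have hvtnw : w.take v.length ≠ w := by
            intro heq
            have := congrArg List.length heq
            rw [hvtlen] at this; omega
          have := lemB (w.take v.length) hvpre hvtne hvtnw (n - v.length)
            (by rw [hvtlen]; exact hagV)
          rw [hvtlen] at this
          exact this hltV
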